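/- Fix dimension d ≥ 2 and size n ≥ 1, and let G be the d-dimensional lattice graph with D = {x ∈ ℤ^d : 1 ≤ x_i ≤ n for all i} and ∂D = {p ∈ ℤ^d : min_{q ∈ D} ‖p − q‖_{ℓ¹} = 1}. Define the diagonal slices L_t = {x ∈ D : Σ x_i = t}, L_t^S = ∪_{ℓ ≤ t} L_ℓ, K_t = {x ∈ ∂D : Σ x_i = t}, K_t^− = {x ∈ K_t : min_i x_i = 0}, K_t^+ = {x ∈ K_t : max_i x_i = n+1}, and J_t^S = K_t^{S−} ∪ K_{t+1}^{S+} where K_t^{S±} = ∪_{ℓ ≤ t} K_ℓ^±. Then for d ≤ t ≤ dn, any function u : L_t^S ∪ J_t^S → ℝ satisfying Δ_γ u = 0 on L_{t−1}^S, u = 0 on J_{t−1}^S, and having zero boundary current D_γ u = 0 on J_{t−1}^S, must be identically zero on L_t^S. -/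

import Mathlib

noncomputable section
open Classical Finset

namespace DiscreteCalderon

/-- Vertices of the ambient lattice `ℤ^d`. -/
abbrev V (d : ℕ) := Fin d → ℤ

/-- Interior vertex set `D = {x : 1 ≤ x_i ≤ n}`. -/
def Dset (d n : ℕ) : Set (V d) := {x | ∀ i, 1 ≤ x i ∧ x i ≤ (n : ℤ)}

/-- ℓ¹ distance. -/
def dist1 {d : ℕ} (p q : V d) : ℤ := ∑ i, |p i - q i|

/-- Boundary vertex set `∂D`: vertices at ℓ¹ distance 1 from `D`. -/
def Bset (d n : ℕ) : Set (V d) := {p | p ∉ Dset d n ∧ ∃ q ∈ Dset d n, dist1 p q = 1}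

/-- All vertices of the graph, `D ∪ ∂D`. -/
def Vset (d n : ℕ) : Set (V d) := Dset d n ∪ Bset d n

/-- Adjacency of the lattice graph: ℓ¹ distance 1, both endpoints vertices,
not both on the boundary. -/
def Adj (d n : ℕ) (p q : V d) : Prop :=
  dist1 p q = 1 ∧ p ∈ Vset d n ∧ q ∈ Vset d n ∧ (p ∈ Dset d n ∨ q ∈ Dset d n)

/-- A finite box containing all vertices. -/
def box (d n : ℕ) : Finset (V d) :=
  Fintype.piFinset (fun _ : Fin d => Finset.Icc (0 : ℤ) ((n : ℤ) + 1))

/-- Neighbours of `p` in the graph, as a finite set. -/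
def nbr (d n : ℕ) (p : V d) : Finset (V d) := (box d n).filter (fun q => Adj d n p q)

/-- Interior neighbours of `p`. -/
def nbrD (d n : ℕ) (p : V d) : Finset (V d) := (nbr d n p).filter (fun q => q ∈ Dset d n)

/-- The discrete (weighted) Laplacian `(Δ_γ u)_p = ∑_{q∈N(p)} γ_{qp}(u_q - u_p)`. -/
def lap (d n : ℕ) (γ : V d → V d → ℝ) (u : V d → ℝ) (p : V d) : ℝ :=
  ∑ q ∈ nbr d n p, γ q p * (u q - u p)

/-- The boundary current `(D_γ u)_p = ∑_{q∈N(p)∩D} γ_{pq}(u_q - u_p)`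
(there is exactly one interior neighbour of a boundary node). -/
def cur (d n : ℕ) (γ : V d → V d → ℝ) (u : V d → ℝ) (p : V d) : ℝ :=
  ∑ q ∈ nbrD d n p, γ p q * (u q - u p)

/-- A strictly positive symmetric conductivity. -/
def GoodCond (d n : ℕ) (γ : V d → V d → ℝ) : Prop :=
  (∀ p q, γ p q = γ q p) ∧ ∀ p q, Adj d n p q → 0 < γ p q

/-- The coordinate sum of a lattice point. -/
def sum1 {d : ℕ} (x : V d) : ℤ := ∑ i, x i

/-- Interior diagonal slice `L_t`. -/
def L (d n : ℕ) (t : ℤ) : Set (V d) := {x | x ∈ Dset d n ∧ sum1 x = t}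

/-- `L_t^S = ∪_{ℓ ≤ t} L_ℓ`. -/
def LS (d n : ℕ) (t : ℤ) : Set (V d) := {x | x ∈ Dset d n ∧ sum1 x ≤ t}

/-- Boundary diagonal slice `K_t`. -/
def K (d n : ℕ) (t : ℤ) : Set (V d) := {x | x ∈ Bset d n ∧ sum1 x = t}

/-- `K_t^- = {x ∈ K_t : min_i x_i = 0}`. -/
def Km (d n : ℕ) (t : ℤ) : Set (V d) := {x | x ∈ K d n t ∧ ∃ i, x i = 0}

/-- `K_t^+ = {x ∈ K_t : max_i x_i = n+1}`. -/
def Kp (d n : ℕ) (t : ℤ) : Set (V d) := {x | x ∈ K d n t ∧ ∃ i, x i = (n : ℤ) + 1}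

/-- `K_t^{S-} = ∪_{ℓ ≤ t} K_ℓ^-`. -/
def KSm (d n : ℕ) (t : ℤ) : Set (V d) := {x | x ∈ Bset d n ∧ sum1 x ≤ t ∧ ∃ i, x i = 0}

/-- `K_t^{S+} = ∪_{ℓ ≤ t} K_ℓ^+`. -/
def KSp (d n : ℕ) (t : ℤ) : Set (V d) := {x | x ∈ Bset d n ∧ sum1 x ≤ t ∧ ∃ i, x i = (n : ℤ) + 1}

/-- The lower boundary region `J_t^S = K_t^{S-} ∪ K_{t+1}^{S+}`. -/
def JS (d n : ℕ) (t : ℤ) : Set (V d) := KSm d n t ∪ KSp d n (t + 1)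

/-- `J_t = K_t^- ∪ K_{t+1}^+`. -/
def Jslice (d n : ℕ) (t : ℤ) : Set (V d) := Km d n t ∪ Kp d n (t + 1)

/-- `u` is the γ-harmonic extension of boundary data `φ` (zero-extension convention
outside `D ∪ ∂D`). -/
def IsSol (d n : ℕ) (γ : V d → V d → ℝ) (φ u : V d → ℝ) : Prop :=
  (∀ p, p ∉ Vset d n → u p = 0) ∧
  (∀ p ∈ Dset d n, lap d n γ u p = 0) ∧
  (∀ p ∈ Bset d n, u p = φ p)

/-- The Laplacian row vector `v_p`. -/
def vrow (d n : ℕ) (γ : V d → V d → ℝ) (p : V d) : V d → ℝ := fun q =>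
  if Adj d n p q then γ p q
  else if q = p then -(∑ r ∈ nbr d n p, γ p r) else 0

/-- Restriction of a function to a set (zero outside). -/
def rst {d : ℕ} (S : Set (V d)) (f : V d → ℝ) : V d → ℝ := fun q => if q ∈ S then f q else 0

/-- Euclidean inner product of (vertex-supported) functions. -/
def dot (d n : ℕ) (f g : V d → ℝ) : ℝ := ∑ p ∈ box d n, f p * g p

/-- The localized solution space `𝒰^{(t)}`: restrictions to `L_t^S ∪ J_t^S` of
harmonic extensions of boundary potentials in `ker T₁^{(t)}`. -/
def Uset (d n : ℕ) (γ : V d → V d → ℝ) (t : ℤ) : Set (V d → ℝ) :=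
  {u | (∀ p, p ∉ LS d n t ∪ JS d n t → u p = 0) ∧
    ∃ φ w : V d → ℝ, (∀ p, p ∉ JS d n t → φ p = 0) ∧ IsSol d n γ φ w ∧
      (∀ p ∈ L d n (t + 1), w p = 0) ∧ ∀ p ∈ LS d n t ∪ JS d n t, u p = w p}

/-- The set `E_t` of edges between the consecutive layers:
`E(K_t^-, L_{t+1}) ∪ E(L_t, K_{t+1}^+) ∪ E(L_t, L_{t+1})`. -/
def EdgeT (d n : ℕ) (t : ℤ) (p q : V d) : Prop :=
  Adj d n p q ∧
    ((p ∈ Km d n t ∧ q ∈ L d n (t + 1)) ∨ (q ∈ Km d n t ∧ p ∈ L d n (t + 1)) ∨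
     (p ∈ L d n t ∧ q ∈ Kp d n (t + 1)) ∨ (q ∈ L d n t ∧ p ∈ Kp d n (t + 1)) ∨
     (p ∈ L d n t ∧ q ∈ L d n (t + 1)) ∨ (q ∈ L d n t ∧ p ∈ L d n (t + 1)))

/-- The edge vector `J_p^u ∈ ℝ^{E_t}`, `J_p^u(pq) = u_p - u_q` on edges of `E_t`
incident to `p`, and `0` otherwise (as a symmetric function of edge endpoints). -/
def Jvec (d n : ℕ) (t : ℤ) (u : V d → ℝ) (p : V d) : V d → V d → ℝ := fun a b =>
  if EdgeT d n t a b then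
    (if a = p then u a - u b else if b = p then u b - u a else 0)
  else 0

/-- Inner product of edge functions. -/
def dotE (d n : ℕ) (f g : V d → V d → ℝ) : ℝ :=
  ∑ p ∈ box d n, ∑ q ∈ box d n, f p q * g p q

/-!
Sweep `D` in the lexicographic order of (coordinate sum, `k`-th coordinate) and look at
`p = x - e_k` for `x ∈ L_t^S`. If `x_k = 1`, then `p ∈ K^-` is a boundary vertex whose only
interior neighbour is `x`, so the vanishing Cauchy data at `p` force `u_x = 0`. Otherwise `p` is
interior with a smaller coordinate sum, and every neighbour of `p` other than `x` either precedes
`x` in the sweep or lies in `J_{t-1}^S`; harmonicity at `p` and `γ_{xp} > 0` then force `u_x = 0`.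
-/

section Lattice

variable {d : ℕ}

lemma dist1_comm (p q : V d) : dist1 p q = dist1 q p := by
  simp only [dist1, abs_sub_comm]

lemma sum1_add_single (x : V d) (k : Fin d) (s : ℤ) : sum1 (x + Pi.single k s) = sum1 x + s := by
  simp [sum1, Finset.sum_add_distrib]

lemma sum1_sub_single (x : V d) (k : Fin d) (s : ℤ) : sum1 (x - Pi.single k s) = sum1 x - s := by
  simp [sum1, Finset.sum_sub_distrib]

lemma dist1_add_single_one (p : V d) (k : Fin d) : dist1 p (p + Pi.single k 1) = 1 := by
  rw [dist1, Fintype.sum_eq_single k fun i hi => by simp [hi]]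
  simp

lemma dist1_sub_single_one (x : V d) (k : Fin d) : dist1 (x - Pi.single k 1) x = 1 := by
  convert dist1_add_single_one (x - Pi.single k 1) k
  exact (sub_add_cancel x _).symm

lemma exists_eq_add_single_of_dist1_eq_one {p q : V d} (h : dist1 p q = 1) :
    ∃ j, q = p + Pi.single j 1 ∨ q = p - Pi.single j 1 := by
  obtain ⟨j, hj⟩ : ∃ j, p j ≠ q j := by
    by_contra! hc
    simp [dist1, hc] at h
  have hrest : ∑ i ∈ Finset.univ.erase j, |p i - q i| = 0 := by
    have := Finset.add_sum_erase _ (fun i => |p i - q i|) (Finset.mem_univ j)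
    have := Int.one_le_abs (sub_ne_zero.mpr hj)
    have := Finset.sum_nonneg fun i (_ : i ∈ Finset.univ.erase j) => abs_nonneg (p i - q i)
    rw [dist1] at h
    omega
  have hj1 : |p j - q j| = 1 := by
    rw [dist1, ← Finset.add_sum_erase _ _ (Finset.mem_univ j), hrest] at h
    simpa using h
  have hoff : ∀ i ≠ j, q i = p i := fun i hi => by
    have := (Finset.sum_eq_zero_iff_of_nonneg fun i _ => abs_nonneg (p i - q i)).mp hrest i
      (Finset.mem_erase.mpr ⟨hi, Finset.mem_univ i⟩)
    rw [abs_eq_zero] at this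
    omega
  refine ⟨j, ?_⟩
  rcases abs_eq (zero_le_one' ℤ) |>.mp hj1 with h1 | h1
  · right; ext i; by_cases hi : i = j
    · subst hi; simp only [Pi.sub_apply, Pi.single_eq_same]; omega
    · simp [hi, hoff i hi]
  · left; ext i; by_cases hi : i = j
    · subst hi; simp only [Pi.add_apply, Pi.single_eq_same]; omega
    · simp [hi, hoff i hi]

end Lattice

section Graph

variable {d n : ℕ}

lemma mem_box_of_mem_Dset {x : V d} (hx : x ∈ Dset d n) : x ∈ box d n := by
  simp only [box, Fintype.mem_piFinset, Finset.mem_Icc]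
  exact fun i => ⟨by linarith [(hx i).1], by linarith [(hx i).2]⟩

lemma Adj.symm {p q : V d} (h : Adj d n p q) : Adj d n q p :=
  ⟨dist1_comm p q ▸ h.1, h.2.2.1, h.2.1, h.2.2.2.symm⟩

lemma adj_of_dist1_eq_one {p x : V d} (hx : x ∈ Dset d n) (h : dist1 p x = 1) :
    Adj d n p x := by
  by_cases hp : p ∈ Dset d n
  · exact ⟨h, Or.inl hp, Or.inl hx, Or.inr hx⟩
  · exact ⟨h, Or.inr ⟨hp, x, hx, h⟩, Or.inl hx, Or.inr hx⟩

lemma mem_Dset_sub_single {x : V d} {k : Fin d} (hx : x ∈ Dset d n) (hk : 2 ≤ x k) :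
    x - Pi.single k 1 ∈ Dset d n := by
  intro i
  by_cases hi : i = k
  · subst hi
    simp only [Pi.sub_apply, Pi.single_eq_same]
    constructor <;> linarith [(hx i).2]
  · simpa [hi] using hx i

lemma eq_one_of_sub_single_notMem_Dset {p : V d} {j : Fin d} (hp : p ∈ Dset d n)
    (hq : p - Pi.single j 1 ∉ Dset d n) : p j = 1 := by
  by_contra hne
  exact hq (mem_Dset_sub_single hp (by have := (hp j).1; omega))

lemma eq_of_add_single_notMem_Dset {p : V d} {j : Fin d} (hp : p ∈ Dset d n)
    (hq : p + Pi.single j 1 ∉ Dset d n) : p j = n := by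
  by_contra hne
  refine hq fun i => ?_
  by_cases hi : i = j
  · subst hi
    simp only [Pi.add_apply, Pi.single_eq_same]
    constructor <;> linarith [(hp i).1, (hp i).2, lt_of_le_of_ne (hp i).2 hne]
  · simpa [hi] using hp i

lemma JS_mono {s t : ℤ} (h : s ≤ t) : JS d n s ⊆ JS d n t := by
  rintro p (⟨hB, hs, hi⟩ | ⟨hB, hs, hi⟩)
  · exact Or.inl ⟨hB, hs.trans h, hi⟩
  · exact Or.inr ⟨hB, by omega, hi⟩

lemma nbrD_sub_single {x : V d} {k : Fin d} (hx : x ∈ Dset d n) (hk : x k = 1) :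
    nbrD d n (x - Pi.single k 1) = {x} := by
  ext q
  simp only [nbrD, nbr, Finset.mem_filter, Finset.mem_singleton]
  constructor
  · rintro ⟨⟨-, hadj⟩, hq⟩
    obtain ⟨j, rfl | rfl⟩ := exists_eq_add_single_of_dist1_eq_one hadj.1
    · by_cases hj : j = k
      · subst hj; simp
      · have := (hq k).1
        simp [Ne.symm hj, hk] at this
    · have := (hq k).1
      by_cases hj : j = k
      · subst hj; simp [hk] at this
      · simp [Ne.symm hj, hk] at this
  · rintro rfl
    exact ⟨⟨mem_box_of_mem_Dset hx, adj_of_dist1_eq_one hx (dist1_sub_single_one _ k)⟩, hx⟩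

end Graph

section Sweep

variable {d n : ℕ}

def SweepLT (k : Fin d) (y x : V d) : Prop :=
  sum1 y < sum1 x ∨ (sum1 y = sum1 x ∧ y k < x k)

lemma sum1_nonneg {x : V d} (hx : x ∈ Dset d n) : 0 ≤ sum1 x :=
  Finset.sum_nonneg fun i _ => by linarith [(hx i).1]

theorem Dset.induction_sweepLT (k : Fin d) {P : V d → Prop}
    (step : ∀ x ∈ Dset d n, (∀ y ∈ Dset d n, SweepLT k y x → P y) → P x) :
    ∀ x ∈ Dset d n, P x := by
  let key : V d → ℕ ×ₗ ℕ := fun x => toLex ((sum1 x).toNat, (x k).toNat)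
  have wf : WellFounded fun y x : V d => y ∈ Dset d n ∧ x ∈ Dset d n ∧ SweepLT k y x := by
    refine Subrelation.wf (fun {y x} ⟨hy, hx, hyx⟩ => ?_) (InvImage.wf key wellFounded_lt)
    have := sum1_nonneg hy
    have := (hy k).1
    show key y < key x
    simp only [key, Prod.Lex.toLex_lt_toLex, SweepLT] at hyx ⊢
    omega
  intro x
  induction x using wf.induction with
  | _ x ih => exact fun hx => step x hx fun y hy hyx => ih y ⟨hy, hx, hyx⟩ hy

lemma sweepLT_or_mem_JS_of_mem_nbr {x q : V d} {k : Fin d} (hx : x ∈ Dset d n) (hk : 2 ≤ x k)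
    (hq : q ∈ nbr d n (x - Pi.single k 1)) (hqx : q ≠ x) :
    (q ∈ Dset d n ∧ SweepLT k q x) ∨ q ∈ JS d n (sum1 x - 1) := by
  have hp := mem_Dset_sub_single hx hk
  simp only [nbr, Finset.mem_filter] at hq
  have hqV := hq.2.2.2.1
  obtain ⟨j, rfl | rfl⟩ := exists_eq_add_single_of_dist1_eq_one hq.2.1
  · have hjk : j ≠ k := by rintro rfl; simp at hqx
    have hsum : sum1 (x - Pi.single k 1 + Pi.single j 1) = sum1 x := by
      rw [sum1_add_single, sum1_sub_single]; ring
    by_cases hqD : x - Pi.single k 1 + Pi.single j 1 ∈ Dset d n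
    · exact Or.inl ⟨hqD, Or.inr ⟨hsum, by simp [hjk.symm]⟩⟩
    · refine Or.inr (Or.inr ⟨hqV.resolve_left hqD, by omega, j, ?_⟩)
      simp [eq_of_add_single_notMem_Dset hp hqD]
  · have hsum : sum1 (x - Pi.single k 1 - Pi.single j 1) = sum1 x - 2 := by
      rw [sum1_sub_single, sum1_sub_single]; ring
    by_cases hqD : x - Pi.single k 1 - Pi.single j 1 ∈ Dset d n
    · exact Or.inl ⟨hqD, Or.inl (by omega)⟩
    · refine Or.inr (Or.inl ⟨hqV.resolve_left hqD, by omega, j, ?_⟩)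
      simp [eq_one_of_sub_single_notMem_Dset hp hqD]

end Sweep

lemma eq_zero_of_sum_mul_sub_eq_zero {ι : Type*} {s : Finset ι} {c u : ι → ℝ} {p x : ι}
    (hx : x ∈ s) (hc : c x ≠ 0) (hp : u p = 0) (hs : ∀ q ∈ s, q ≠ x → u q = 0)
    (h : ∑ q ∈ s, c q * (u q - u p) = 0) : u x = 0 := by
  rw [Finset.sum_eq_single_of_mem x hx fun q hq hqx => by rw [hs q hq hqx, hp, sub_zero, mul_zero],
    hp, sub_zero] at h
  exact (mul_eq_zero.mp h).resolve_left hc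

section UniqueContinuation

variable {d n : ℕ} {γ : V d → V d → ℝ} {u : V d → ℝ} {t : ℤ}

lemma eq_zero_of_forall_sweepLT (hγ : GoodCond d n γ)
    (hharm : ∀ p ∈ LS d n (t - 1), lap d n γ u p = 0)
    (hdir : ∀ p ∈ JS d n (t - 1), u p = 0)
    (hneu : ∀ p ∈ JS d n (t - 1), cur d n γ u p = 0)
    {k : Fin d} {x : V d} (hx : x ∈ Dset d n) (hxt : sum1 x ≤ t)
    (ih : ∀ y ∈ Dset d n, SweepLT k y x → u y = 0) : u x = 0 := by
  set p := x - Pi.single k 1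
  have hpx : Adj d n p x := adj_of_dist1_eq_one hx (dist1_sub_single_one x k)
  have hsum : sum1 p = sum1 x - 1 := sum1_sub_single x k 1
  by_cases hk : x k = 1
  · have hnbrD : nbrD d n p = {x} := nbrD_sub_single hx hk
    have hpB : p ∈ Bset d n := hpx.2.1.resolve_left fun hp => by simpa [p, hk] using (hp k).1
    have hpJ : p ∈ JS d n (t - 1) := Or.inl ⟨hpB, by omega, k, by simp [p, hk]⟩
    refine eq_zero_of_sum_mul_sub_eq_zero (s := nbrD d n p) (by simp [hnbrD])
      (hγ.2 p x hpx).ne' (hdir p hpJ) (fun q hq hqx => absurd ?_ hqx) (hneu p hpJ)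
    rwa [hnbrD, Finset.mem_singleton] at hq
  · have hk2 : 2 ≤ x k := by have := (hx k).1; omega
    have hp : p ∈ Dset d n := mem_Dset_sub_single hx hk2
    refine eq_zero_of_sum_mul_sub_eq_zero (c := fun q => γ q p)
      (Finset.mem_filter.mpr ⟨mem_box_of_mem_Dset hx, hpx⟩) (hγ.2 x p hpx.symm).ne'
      (ih p hp (Or.inl (by omega))) (fun q hq hqx => ?_) (hharm p ⟨hp, by omega⟩)
    rcases sweepLT_or_mem_JS_of_mem_nbr hx hk2 hq hqx with ⟨hqD, hqx⟩ | hqJ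
    · exact ih q hqD hqx
    · exact hdir q (JS_mono (by omega) hqJ)

end UniqueContinuation

theorem stmt2_general (d n : ℕ) (hd : 2 ≤ d)
    (γ : V d → V d → ℝ) (hγ : GoodCond d n γ)
    (t : ℤ)
    (u : V d → ℝ)
    (hharm : ∀ p ∈ LS d n (t - 1), lap d n γ u p = 0)
    (hdir : ∀ p ∈ JS d n (t - 1), u p = 0)
    (hneu : ∀ p ∈ JS d n (t - 1), cur d n γ u p = 0) :
    ∀ p ∈ LS d n t, u p = 0 := by
  let k : Fin d := ⟨0, by omega⟩
  suffices h : ∀ x ∈ Dset d n, sum1 x ≤ t → u x = 0 from fun x hx => h x hx.1 hx.2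
  refine Dset.induction_sweepLT k fun x hx ih hxt => ?_
  refine eq_zero_of_forall_sweepLT hγ hharm hdir hneu hx hxt fun y hy hyx => ih y hy hyx ?_
  rcases hyx with h | ⟨h, -⟩ <;> omega

/-- discrete unique continuation from Cauchy data on the lower
corner boundary `J_{t-1}^S`. -/
theorem stmt2 (d n : ℕ) (hd : 2 ≤ d) (hn : 1 ≤ n)
    (γ : V d → V d → ℝ) (hγ : GoodCond d n γ)
    (t : ℤ) (ht1 : (d : ℤ) ≤ t) (ht2 : t ≤ (d : ℤ) * n)
    (u : V d → ℝ)
    (hsupp : ∀ p, p ∉ LS d n t ∪ JS d n t → u p = 0)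
    (hharm : ∀ p ∈ LS d n (t - 1), lap d n γ u p = 0)
    (hdir : ∀ p ∈ JS d n (t - 1), u p = 0)
    (hneu : ∀ p ∈ JS d n (t - 1), cur d n γ u p = 0) :
    ∀ p ∈ LS d n t, u p = 0 :=
  stmt2_general d n hd γ hγ t u hharm hdir hneu

end DiscreteCalderon
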